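/- arXiv:2110.10587 — 6 statements merged into one kernel-verified Lean document; each statement's English description precedes it below -/
import Mathlib

section
/- If μ is a pointwise restriction and χ is any restriction, then the composite μχ (defined by G_{μχ} := (G_μ)_χ) is a restriction. -/
/-! A pointwise `μ` keeps exactly those `s ∈ G` with `s ∈ μ {s}`. Hence if `χ (μ G) ⊆ H ⊆ G`,
then `χ (μ G) ⊆ μ H ⊆ μ G`, and the restriction property of `χ` at `μ G` gives
`χ (μ H) = χ (μ G)`. -/

/-- A restriction on finite graphs: `χ G ⊆ G` and `χ G ⊆ H ⊆ G → χ H = χ G`. -/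
def IsRestriction {S : Type*} [DecidableEq S] (χ : Finset S → Finset S) : Prop :=
  (∀ G : Finset S, χ G ⊆ G) ∧ ∀ G H : Finset S, χ G ⊆ H → H ⊆ G → χ H = χ G

/-- A pointwise function: it acts independently on each element. -/
def IsPointwise {S : Type*} [DecidableEq S] (μ : Finset S → Finset S) : Prop :=
  (∀ s : S, μ {s} ⊆ {s}) ∧ ∀ G : Finset S, μ G = G.biUnion (fun s => μ {s})

namespace IsPointwise

variable {S : Type*} [DecidableEq S] {μ : Finset S → Finset S}

theorem mem_iff (hμ : IsPointwise μ) {G : Finset S} {s : S} :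
    s ∈ μ G ↔ s ∈ G ∧ s ∈ μ {s} := by
  rw [hμ.2 G, Finset.mem_biUnion]
  constructor
  · rintro ⟨t, htG, hst⟩
    obtain rfl : s = t := Finset.mem_singleton.mp (hμ.1 t hst)
    exact ⟨htG, hst⟩
  · rintro ⟨hsG, hs⟩
    exact ⟨s, hsG, hs⟩

theorem subset (hμ : IsPointwise μ) (G : Finset S) : μ G ⊆ G :=
  fun _ hs => (hμ.mem_iff.mp hs).1

theorem monotone (hμ : IsPointwise μ) : Monotone μ :=
  fun _ _ hHG _ hs => hμ.mem_iff.mpr ⟨hHG (hμ.mem_iff.mp hs).1, (hμ.mem_iff.mp hs).2⟩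

theorem subset_apply_of_subset (hμ : IsPointwise μ) {A G H : Finset S}
    (hAG : A ⊆ μ G) (hAH : A ⊆ H) : A ⊆ μ H :=
  fun _ hs => hμ.mem_iff.mpr ⟨hAH hs, (hμ.mem_iff.mp (hAG hs)).2⟩

end IsPointwise

theorem pointwise_comp_isRestriction_general {S : Type*} [DecidableEq S]
    (μ χ : Finset S → Finset S) (hμp : IsPointwise μ)
    (hχ : IsRestriction χ) :
    IsRestriction (fun G => χ (μ G)) := by
  refine ⟨fun G => (hχ.1 (μ G)).trans (hμp.subset G), fun G H hGH hHG => ?_⟩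
  exact hχ.2 (μ G) (μ H) (hμp.subset_apply_of_subset (hχ.1 (μ G)) hGH) (hμp.monotone hHG)

/-- If `μ` is a pointwise restriction and `χ` any restriction, the composite
`μχ` (i.e. `G ↦ (G_μ)_χ`) is a restriction. -/
theorem pointwise_comp_isRestriction {S : Type*} [DecidableEq S]
    (μ χ : Finset S → Finset S) (hμp : IsPointwise μ) (hμ : IsRestriction μ)
    (hχ : IsRestriction χ) :
    IsRestriction (fun G => χ (μ G)) :=
  pointwise_comp_isRestriction_general μ χ hμp hχ
end

section
/- Every r-disk χ^r of a restriction χ is itself a restriction: if G_{χ^r} ⊆ H ⊆ G then H_{χ^r} = G_{χ^r}. -/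
/-- The `r`-disk `χ^r` of a restriction `χ`: a function `d` mapping `G` to the
subgraph induced by `G_χ` together with its `r`-neighbours in `G`.  It satisfies
`G_χ ⊆ d G ⊆ G`, and for `H ⊆ G` with `χ H = χ G`, the neighbours of `G_χ` in `H`
are those neighbours of `G_χ` in `G` belonging to `H`, i.e. `d H = d G ∩ H`. -/
def IsDisk {S : Type*} [DecidableEq S]
    (χ d : Finset S → Finset S) : Prop :=
  (∀ G : Finset S, χ G ⊆ d G ∧ d G ⊆ G) ∧
  (∀ G H : Finset S, H ⊆ G → χ H = χ G → d H = d G ∩ H)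

namespace IsDisk

variable {S : Type*} [DecidableEq S] {χ d : Finset S → Finset S}

theorem apply_subset (hd : IsDisk χ d) (G : Finset S) : d G ⊆ G :=
  (hd.1 G).2

theorem apply_eq_of_subset (hχ : IsRestriction χ) (hd : IsDisk χ d) {G H : Finset S}
    (hGH : d G ⊆ H) (hHG : H ⊆ G) : d H = d G := by
  have hχHG : χ H = χ G := hχ.2 G H ((hd.1 G).1.trans hGH) hHG
  rw [hd.2 G H hHG hχHG, Finset.inter_eq_left.2 hGH]

end IsDisk

/-- Every disk `χ^r` of a restriction `χ` is itself a restriction: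
if `G_{χ^r} ⊆ H ⊆ G` then `H_{χ^r} = G_{χ^r}`. -/
theorem disk_isRestriction {S : Type*} [DecidableEq S]
    (χ d : Finset S → Finset S) (hχ : IsRestriction χ) (hd : IsDisk χ d) :
    IsRestriction d :=
  ⟨hd.apply_subset, fun _ _ hGH hHG => hd.apply_eq_of_subset hχ hGH hHG⟩
end

section
/- Trace-trace composition under comprehension: if ζ ⊑ χ (ζ is comprehended within χ), then (ρ_{|χ})_{|ζ} = ρ_{|ζ} for all trace-class ρ. -/
open Matrix

/-- The generalized partial trace on the space of operators over the Hilbert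
space with orthonormal basis indexed by graphs: the linear extension of
`(|G⟩⟨H|)_{|χ} := |G_χ⟩⟨H_χ| · ⟨H_{χ̄}|G_{χ̄}⟩`. -/
noncomputable def ptr {S : Type*} [DecidableEq S] [Fintype S] (χ : Finset S → Finset S)
    (ρ : Matrix (Finset S) (Finset S) ℂ) : Matrix (Finset S) (Finset S) ℂ :=
  Matrix.of fun K L => ∑ G : Finset S, ∑ H : Finset S,
    if χ G = K ∧ χ H = L ∧ G \ χ G = H \ χ H then ρ G H else 0

/-- Comprehension `ζ ⊑ χ`: (i) `G_{χζ} = G_ζ` and (ii) equality outside `ζ`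
decomposes as equality outside `ζ` inside `χ`, together with equality outside `χ`. -/
def Comprehension {S : Type*} [DecidableEq S] (ζ χ : Finset S → Finset S) : Prop :=
  (∀ G : Finset S, ζ (χ G) = ζ G) ∧
  (∀ G H : Finset S,
    (G \ ζ G = H \ ζ H) ↔ ((χ G \ ζ (χ G) = χ H \ ζ (χ H)) ∧ (G \ χ G = H \ χ H)))

open Finset

/-! Both sides are sums of `ρ G H` over pairs `(G, H)` selected by a condition: on the left,
`(G_χ, H_χ)` must be selected by `ptr ζ` and `(G, H)` must agree outside `χ`. Axiom (i) turns
`ζ ∘ χ` into `ζ`, and axiom (ii) says the two agreement conditions together are agreement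
outside `ζ`. -/

theorem sum_sum_ite_sum_sum_fiber {ι κ M : Type*} [Fintype ι] [Fintype κ] [DecidableEq κ]
    [AddCommMonoid M] (f : ι → κ) (p : κ → κ → Prop) (q : ι → ι → Prop) [DecidableRel p]
    [DecidableRel q] (g : ι → ι → M) :
    ∑ a, ∑ b, (if p a b then ∑ i, ∑ j, if f i = a ∧ f j = b ∧ q i j then g i j else 0 else 0)
      = ∑ i, ∑ j, if p (f i) (f j) ∧ q i j then g i j else 0 := by
  calc _ = ∑ a, ∑ b, ∑ i, ∑ j,
        if f j = b then (if f i = a then (if p a b ∧ q i j then g i j else 0) else 0) else 0 := by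
        refine sum_congr rfl fun a _ => sum_congr rfl fun b _ => ?_
        split_ifs with h
        · refine sum_congr rfl fun i _ => sum_congr rfl fun j _ => ?_
          split_ifs <;> tauto
        · simp [h]
    _ = ∑ i, ∑ j, ∑ a, ∑ b,
        if f j = b then (if f i = a then (if p a b ∧ q i j then g i j else 0) else 0) else 0 := by
        simp_rw [sum_comm (γ := κ) (α := ι)]
    _ = _ := by simp only [sum_ite_eq, mem_univ, if_true]

section

variable {S : Type*} [DecidableEq S]

theorem ptr_ptr_apply [Fintype S] (ζ χ : Finset S → Finset S)
    (ρ : Matrix (Finset S) (Finset S) ℂ) (K L : Finset S) :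
    ptr ζ (ptr χ ρ) K L = ∑ G, ∑ H,
      if (ζ (χ G) = K ∧ ζ (χ H) = L ∧ χ G \ ζ (χ G) = χ H \ ζ (χ H)) ∧ G \ χ G = H \ χ H
      then ρ G H else 0 := by
  simp only [ptr, of_apply]
  exact sum_sum_ite_sum_sum_fiber χ (fun G' H' => ζ G' = K ∧ ζ H' = L ∧ G' \ ζ G' = H' \ ζ H')
    (fun G H => G \ χ G = H \ χ H) ρ

theorem Comprehension.ptr_ptr_condition_iff {ζ χ : Finset S → Finset S}
    (hc : Comprehension ζ χ) (G H K L : Finset S) :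
    ((ζ (χ G) = K ∧ ζ (χ H) = L ∧ χ G \ ζ (χ G) = χ H \ ζ (χ H)) ∧ G \ χ G = H \ χ H) ↔
      (ζ G = K ∧ ζ H = L ∧ G \ ζ G = H \ ζ H) := by
  rw [hc.2 G H, hc.1 G, hc.1 H, and_assoc, and_assoc]

end

theorem ptr_ptr_of_comprehension_general {S : Type*} [DecidableEq S] [Fintype S]
    (ζ χ : Finset S → Finset S) (hc : Comprehension ζ χ) :
    ∀ ρ : Matrix (Finset S) (Finset S) ℂ, ptr ζ (ptr χ ρ) = ptr ζ ρ := by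
  intro ρ
  ext K L
  rw [ptr_ptr_apply]
  simp only [ptr, of_apply]
  exact sum_congr rfl fun G _ => sum_congr rfl fun H _ =>
    if_congr (hc.ptr_ptr_condition_iff G H K L) rfl rfl

/-- Trace-trace composition under comprehension: if `ζ ⊑ χ` then
`(ρ_{|χ})_{|ζ} = ρ_{|ζ}` for every trace-class `ρ`. -/
theorem ptr_ptr_of_comprehension {S : Type*} [DecidableEq S] [Fintype S]
    (ζ χ : Finset S → Finset S) (hζ : IsRestriction ζ) (hχ : IsRestriction χ)
    (hc : Comprehension ζ χ) :
    ∀ ρ : Matrix (Finset S) (Finset S) ℂ, ptr ζ (ptr χ ρ) = ptr ζ ρ :=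
  ptr_ptr_of_comprehension_general ζ χ hc
end

section
/- Dual locality: an operator A is χ-local if and only if Tr(Aρ) = Tr(Aρ_{|χ}) for all trace-class ρ; equivalently, (A|G⟩⟨H|)_{|∅} = (A(|G⟩⟨H|)_{|χ})_{|∅} for all basis graphs G, H. -/
/-! Under the trace pairing `(A, ρ) ↦ Tr(Aρ)`, `ptr χ` is adjoint to `ptrDual χ`, whose fixed
points are exactly the `χ`-local operators, and the pairing is nondegenerate already on matrix
units. -/

open Matrix

/-- `A` is `χ`-local. -/
def IsLocalOp {S : Type*} [DecidableEq S] (χ : Finset S → Finset S)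
    (A : Matrix (Finset S) (Finset S) ℂ) : Prop :=
  ∀ G H : Finset S,
    A H G = A (χ H) (χ G) * (if H \ χ H = G \ χ G then 1 else 0)


namespace Matrix

theorem ext_iff_trace_mul_single_right {n R : Type*} [Fintype n] [DecidableEq n]
    [NonAssocSemiring R] {A B : Matrix n n R} :
    A = B ↔ ∀ i j, (A * single i j 1).trace = (B * single i j 1).trace := by
  simp only [trace_mul_single, op_smul_eq_mul, mul_one, ← Matrix.ext_iff]
  exact forall_comm

end Matrix

section

variable {S : Type*} [DecidableEq S]

/-- `A ↦ A_χ ⊗ 1_χ̄`. -/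
def ptrDual (χ : Finset S → Finset S) (A : Matrix (Finset S) (Finset S) ℂ) :
    Matrix (Finset S) (Finset S) ℂ :=
  of fun H G => A (χ H) (χ G) * if H \ χ H = G \ χ G then 1 else 0

theorem isLocalOp_iff_eq_ptrDual (χ : Finset S → Finset S)
    (A : Matrix (Finset S) (Finset S) ℂ) : IsLocalOp χ A ↔ A = ptrDual χ A := by
  rw [← Matrix.ext_iff]
  exact forall_comm

theorem trace_mul_ptr [Fintype S] (χ : Finset S → Finset S)
    (A ρ : Matrix (Finset S) (Finset S) ℂ) :
    (A * ptr χ ρ).trace = (ptrDual χ A * ρ).trace := by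
  simp only [trace, diag_apply, mul_apply, ptr, ptrDual, of_apply, Finset.mul_sum, mul_ite,
    mul_zero, ite_and]
  -- bring the sums over `G`, `H` outside, so that `χ G = K`, `χ H = L` collapse those over `K`, `L`
  rw [Finset.sum_comm_cycle]
  conv_rhs => rw [Finset.sum_comm]
  refine Finset.sum_congr rfl fun G _ => ?_
  rw [Finset.sum_comm_cycle]
  refine Finset.sum_congr rfl fun H _ => ?_
  simp only [Finset.sum_ite_eq, Finset.mem_univ, if_true, mul_one, ite_mul, zero_mul,
    eq_comm (a := H \ χ H)]

end

theorem dual_locality_general {S : Type*} [DecidableEq S] [Fintype S]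
    (χ : Finset S → Finset S)
    (A : Matrix (Finset S) (Finset S) ℂ) :
    (IsLocalOp χ A ↔
      ∀ ρ : Matrix (Finset S) (Finset S) ℂ, (A * ρ).trace = (A * ptr χ ρ).trace) ∧
    (IsLocalOp χ A ↔
      ∀ G H : Finset S,
        (A * Matrix.single G H (1 : ℂ)).trace
          = (A * ptr χ (Matrix.single G H (1 : ℂ))).trace) := by
  simp only [isLocalOp_iff_eq_ptrDual, trace_mul_ptr]
  exact ⟨ext_iff_trace_mul_right, ext_iff_trace_mul_single_right⟩

/-- Dual locality: `A` is `χ`-local iff `Tr(Aρ) = Tr(Aρ_{|χ})` for all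
trace-class `ρ`; equivalently, `(A|G⟩⟨H|)_{|∅} = (A(|G⟩⟨H|)_{|χ})_{|∅}`
for all basis graphs `G`, `H`. -/
theorem dual_locality {S : Type*} [DecidableEq S] [Fintype S]
    (χ : Finset S → Finset S) (hχ : IsRestriction χ)
    (A : Matrix (Finset S) (Finset S) ℂ) :
    (IsLocalOp χ A ↔
      ∀ ρ : Matrix (Finset S) (Finset S) ℂ, (A * ρ).trace = (A * ptr χ ρ).trace) ∧
    (IsLocalOp χ A ↔
      ∀ G H : Finset S,
        (A * Matrix.single G H (1 : ℂ)).trace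
          = (A * ptr χ (Matrix.single G H (1 : ℂ))).trace) :=
  dual_locality_general χ A
end

section
/- Strict locality equals locality plus consistency-preservation: A is strictly χ-local (i.e. A, A†A, and AA† are all χ-local) if and only if A is χ-local and χ-consistent-preserving. -/
open Matrix

/-- `|L⟩ ⊗_χ |R⟩ ≠ 0`, i.e. `L` and `R` are `χ`-consistent: there is a graph
`G'` with `G'_χ = L` and `G'_{χ̄} = R`. -/
def ConsistentPair {S : Type*} [DecidableEq S] (χ : Finset S → Finset S)
    (L R : Finset S) : Prop :=
  ∃ G' : Finset S, χ G' = L ∧ G' \ χ G' = R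

/-- `A` is `χ`-consistent-preserving: `⟨H|A|G_χ⟩ ≠ 0 ⟹ |H⟩ ⊗_χ |G_{χ̄}⟩ ≠ 0`,
and likewise for `A†`. -/
def ConsPres {S : Type*} [DecidableEq S] (χ : Finset S → Finset S)
    (A : Matrix (Finset S) (Finset S) ℂ) : Prop :=
  (∀ G H : Finset S, A H (χ G) ≠ 0 → ConsistentPair χ H (G \ χ G)) ∧
  (∀ G H : Finset S, A.conjTranspose H (χ G) ≠ 0 → ConsistentPair χ H (G \ χ G))

/-! For a `χ`-local `A`, the entry `⟨H|A†A|G⟩` vanishes unless `H_χ̄ = G_χ̄`, and then it is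
`⟨H_χ|A†A|G_χ⟩` with the sum over intermediate states cut down to those consistent with `G_χ̄`.
So `A†A` is local iff the inconsistent intermediate states never contribute; on the diagonal
this is `‖A|G⟩‖ = ‖A|G_χ⟩‖`, which forces `A|G_χ⟩` to have no inconsistent components. The
condition on `A†` is the same statement for `A†`, which is again local, since `A A† = A†† A†`. -/

theorem eq_zero_of_sum_ite_star_mul_self_eq {ι R : Type*} [Fintype ι]
    [PartialOrder R] [NonUnitalRing R] [StarRing R] [StarOrderedRing R] [NoZeroDivisors R]
    (p : ι → Prop) [DecidablePred p] (v : ι → R)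
    (h : ∑ i, (if p i then star (v i) * v i else 0) = ∑ i, star (v i) * v i)
    {i : ι} (hi : ¬ p i) : v i = 0 := by
  set w : ι → R := fun j => if p j then 0 else v j
  have hsplit : star w ⬝ᵥ w + ∑ j, (if p j then star (v j) * v j else 0)
      = ∑ j, star (v j) * v j := by
    rw [dotProduct, ← Finset.sum_add_distrib]
    exact Finset.sum_congr rfl fun j _ => by by_cases hj : p j <;> simp [w, hj]
  rw [h, add_eq_right, dotProduct_star_self_eq_zero] at hsplit
  simpa [w, hi] using congrFun hsplit i

namespace IsRestriction

variable {S : Type*} [DecidableEq S] {χ : Finset S → Finset S}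

theorem union_sdiff (hχ : IsRestriction χ) (G : Finset S) : χ G ∪ (G \ χ G) = G :=
  Finset.union_sdiff_of_subset (hχ.1 G)

theorem consistentPair_iff (hχ : IsRestriction χ) {L R : Finset S} :
    ConsistentPair χ L R ↔ χ (L ∪ R) = L ∧ (L ∪ R) \ χ (L ∪ R) = R := by
  refine ⟨?_, fun h => ⟨L ∪ R, h⟩⟩
  rintro ⟨G, rfl, rfl⟩
  rw [hχ.union_sdiff]
  exact ⟨rfl, rfl⟩

open Classical in
/-- `K ↦ χ K` is a bijection from the graphs with complement `R` onto the `L` consistent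
with `R`, with inverse `L ↦ L ∪ R`. -/
theorem sum_ite_sdiff_eq [Fintype S] (hχ : IsRestriction χ) (R : Finset S) {M : Type*}
    [AddCommMonoid M] (F : Finset S → M) :
    ∑ K, (if K \ χ K = R then F (χ K) else 0)
      = ∑ L, if ConsistentPair χ L R then F L else 0 := by
  rw [← Finset.sum_filter, ← Finset.sum_filter]
  refine Finset.sum_nbij' χ (· ∪ R) ?_ ?_ ?_ ?_ fun _ _ => rfl
  all_goals simp only [Finset.mem_filter, Finset.mem_univ, true_and]
  · exact fun K hK => ⟨K, rfl, hK⟩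
  · exact fun L hL => (hχ.consistentPair_iff.1 hL).2
  · rintro K rfl
    exact hχ.union_sdiff K
  · exact fun L hL => (hχ.consistentPair_iff.1 hL).1

end IsRestriction

namespace IsLocalOp

variable {S : Type*} [DecidableEq S] {χ : Finset S → Finset S}
  {A : Matrix (Finset S) (Finset S) ℂ}

theorem conjTranspose (hA : IsLocalOp χ A) : IsLocalOp χ Aᴴ := by
  intro G H
  simp [hA H G, eq_comm, apply_ite (starRingEnd ℂ)]

open Classical in
theorem conjTranspose_mul_self_apply [Fintype S] (hχ : IsRestriction χ)
    (hA : IsLocalOp χ A) (G H : Finset S) :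
    (Aᴴ * A) H G = (∑ L, if ConsistentPair χ L (G \ χ G)
        then star (A L (χ H)) * A L (χ G) else 0) * (if H \ χ H = G \ χ G then 1 else 0) := by
  by_cases hHG : H \ χ H = G \ χ G
  · rw [if_pos hHG, mul_one, ← hχ.sum_ite_sdiff_eq, mul_apply]
    refine Finset.sum_congr rfl fun K _ => ?_
    rw [conjTranspose_apply, hA H K, hA G K, hHG]
    split_ifs <;> simp
  · rw [if_neg hHG, mul_zero, mul_apply]
    refine Finset.sum_eq_zero fun K _ => ?_
    rw [conjTranspose_apply, hA H K, hA G K]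
    split_ifs with hKH hKG
    · exact absurd (hKH.symm.trans hKG) hHG
    all_goals simp

open scoped ComplexOrder in
theorem conjTranspose_mul_self_iff [Fintype S] (hχ : IsRestriction χ) (hA : IsLocalOp χ A) :
    IsLocalOp χ (Aᴴ * A) ↔
      ∀ G H : Finset S, A H (χ G) ≠ 0 → ConsistentPair χ H (G \ χ G) := by
  classical
  constructor
  · intro h G H hne
    by_contra hcon
    have hdiag := h G G
    rw [hA.conjTranspose_mul_self_apply hχ, mul_apply] at hdiag
    simp only [if_true, mul_one, conjTranspose_apply] at hdiag
    exact hne (eq_zero_of_sum_ite_star_mul_self_eq (ConsistentPair χ · (G \ χ G))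
      (fun L => A L (χ G)) hdiag hcon)
  · intro h G H
    rw [hA.conjTranspose_mul_self_apply hχ, mul_apply]
    by_cases hHG : H \ χ H = G \ χ G
    · simp only [if_pos hHG, mul_one, conjTranspose_apply]
      refine Finset.sum_congr rfl fun L _ => ?_
      by_cases hL : ConsistentPair χ L (G \ χ G)
      · rw [if_pos hL]
      · have hzero : A L (χ H) = 0 := by_contra fun hne => hL (hHG ▸ h H L hne)
        simp [hL, hzero]
    · simp only [if_neg hHG, mul_zero]

end IsLocalOp

/-- Strict locality equals locality plus consistency-preservation: `A`, `A†A`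
and `AA†` are all `χ`-local iff `A` is `χ`-local and `χ`-consistent-preserving. -/
theorem strict_locality_iff {S : Type*} [DecidableEq S] [Fintype S]
    (χ : Finset S → Finset S) (hχ : IsRestriction χ)
    (A : Matrix (Finset S) (Finset S) ℂ) :
    (IsLocalOp χ A ∧ IsLocalOp χ (A.conjTranspose * A) ∧
        IsLocalOp χ (A * A.conjTranspose)) ↔
      (IsLocalOp χ A ∧ ConsPres χ A) := by
  refine and_congr_right fun hA => ?_
  have hA' := hA.conjTranspose.conjTranspose_mul_self_iff hχ
  rw [conjTranspose_conjTranspose] at hA'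
  exact and_congr (hA.conjTranspose_mul_self_iff hχ) hA'
end

section
/- Interchange law: if A and A' are χ-consistent-preserving, then (A' ⊗_χ I)(A ⊗_χ I) = (A'A) ⊗_χ I, and A'A is again χ-consistent-preserving. -/
/-!
In `(A' ⊗_χ I)(A ⊗_χ I)` the identity factor forces every intermediate graph `K` to have the same
complement `R = G \ χ G` as the input, so the product sums `A' (χ H) (χ K) * A (χ K) (χ G)` over
the `K` with `K \ χ K = R`. As `K = χ K ∪ R`, this is a sum over the `M = χ K` consistent with
`R`, and because `A` only produces such `M`, it is the whole sum defining `(A'A) (χ H) (χ G)`.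
Consistency preservation passes to `A'A` through a nonzero summand, for `A'A` and for
`(A'A)ᴴ = Aᴴ A'ᴴ` alike.
-/

open Matrix

/-- The generalized tensor `A ⊗_χ B`. -/
noncomputable def tensorChi {S : Type*} [DecidableEq S] (χ : Finset S → Finset S)
    (A B : Matrix (Finset S) (Finset S) ℂ) : Matrix (Finset S) (Finset S) ℂ :=
  Matrix.of fun H G => A (χ H) (χ G) * B (H \ χ H) (G \ χ G)

/-- The first half of `ConsPres`; the second half is this condition for `Aᴴ`. -/
def MapsConsistent {S : Type*} [DecidableEq S] (χ : Finset S → Finset S)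
    (A : Matrix (Finset S) (Finset S) ℂ) : Prop :=
  ∀ G H : Finset S, A H (χ G) ≠ 0 → ConsistentPair χ H (G \ χ G)

section

variable {S : Type*} [DecidableEq S] {χ : Finset S → Finset S}

theorem consPres_iff {A : Matrix (Finset S) (Finset S) ℂ} :
    ConsPres χ A ↔ MapsConsistent χ A ∧ MapsConsistent χ Aᴴ :=
  Iff.rfl

theorem tensorChi_one_apply (A : Matrix (Finset S) (Finset S) ℂ) (H G : Finset S) :
    tensorChi χ A 1 H G = if H \ χ H = G \ χ G then A (χ H) (χ G) else 0 := by
  simp [tensorChi, one_apply]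

variable [Fintype S]

theorem MapsConsistent.mul {A A' : Matrix (Finset S) (Finset S) ℂ}
    (hA' : MapsConsistent χ A') (hA : MapsConsistent χ A) : MapsConsistent χ (A' * A) := by
  intro G H h
  obtain ⟨M, -, hM⟩ := Finset.exists_ne_zero_of_sum_ne_zero h
  obtain ⟨G', rfl, hG'⟩ := hA G M (right_ne_zero_of_mul hM)
  simpa [hG'] using hA' G' H (left_ne_zero_of_mul hM)

theorem ConsPres.mul {A A' : Matrix (Finset S) (Finset S) ℂ}
    (hA' : ConsPres χ A') (hA : ConsPres χ A) : ConsPres χ (A' * A) := by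
  rw [consPres_iff, conjTranspose_mul]
  exact ⟨MapsConsistent.mul hA'.1 hA.1, MapsConsistent.mul hA.2 hA'.2⟩

/-- `K ↦ χ K` is a bijection from the graphs with `K \ χ K = R` onto the `M` consistent with
`R`, with inverse `M ↦ M ∪ R`. -/
theorem sum_sdiff_eq_sum_of_consistentPair {β : Type*} [AddCommMonoid β]
    (hsub : ∀ G, χ G ⊆ G) (R : Finset S) {f : Finset S → β}
    (hf : ∀ M, ¬ ConsistentPair χ M R → f M = 0) :
    ∑ K with K \ χ K = R, f (χ K) = ∑ M, f M := by
  classical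
  rw [← Finset.sum_filter_of_ne (p := fun M => ConsistentPair χ M R)
    (fun M _ h => by_contra fun hM => h (hf M hM))]
  have union_eq {K : Finset S} (hK : K \ χ K = R) : χ K ∪ R = K := by
    rw [← hK, Finset.union_sdiff_of_subset (hsub K)]
  refine Finset.sum_nbij' (fun K => χ K) (fun M => M ∪ R) ?_ ?_ ?_ ?_ (fun _ _ => rfl) <;>
    simp only [Finset.mem_filter_univ]
  · intro K hK
    exact ⟨K, rfl, hK⟩
  · rintro M ⟨G', rfl, rfl⟩
    rw [union_eq rfl]
  · exact fun K hK => union_eq hK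
  · rintro M ⟨G', rfl, rfl⟩
    rw [union_eq rfl]

theorem tensorChi_one_mul_tensorChi_one (hsub : ∀ G, χ G ⊆ G)
    {A : Matrix (Finset S) (Finset S) ℂ} (hA : MapsConsistent χ A)
    (A' : Matrix (Finset S) (Finset S) ℂ) :
    tensorChi χ A' 1 * tensorChi χ A 1 = tensorChi χ (A' * A) 1 := by
  ext H G
  simp only [mul_apply, tensorChi_one_apply, ite_mul, mul_ite, zero_mul, mul_zero]
  split_ifs with hHG
  · rw [← sum_sdiff_eq_sum_of_consistentPair hsub (G \ χ G)
      (fun M hM => by_contra fun h => hM (hA G M (right_ne_zero_of_mul h))), Finset.sum_filter]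
    refine Finset.sum_congr rfl fun K _ => ?_
    by_cases hK : K \ χ K = G \ χ G <;> simp [hK, hHG]
  · refine Finset.sum_eq_zero fun K _ => ?_
    by_cases hK : K \ χ K = G \ χ G <;> simp [hK, hHG]

end

/-- Interchange law: if `A` and `A'` are `χ`-consistent-preserving, then
`(A' ⊗_χ I)(A ⊗_χ I) = (A'A) ⊗_χ I`, and `A'A` is again
`χ`-consistent-preserving. -/
theorem interchange_law {S : Type*} [DecidableEq S] [Fintype S]
    (χ : Finset S → Finset S) (hχ : IsRestriction χ)
    (A A' : Matrix (Finset S) (Finset S) ℂ)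
    (hA : ConsPres χ A) (hA' : ConsPres χ A') :
    tensorChi χ A' 1 * tensorChi χ A 1 = tensorChi χ (A' * A) 1 ∧
      ConsPres χ (A' * A) :=
  ⟨tensorChi_one_mul_tensorChi_one hχ.1 hA.1 A', hA'.mul hA⟩
end
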